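/- Let H be a Heyting algebra, x, u filters of H and y an ideal of H. Define x ⇝ y to be the ideal generated by {a → b : a ∈ x, b ∈ y}. Then u ∩ (x ⇝ y) ≠ ∅ if and only if (x ∨ u) ∩ y ≠ ∅, where x ∨ u is the filter generated by x ∪ u. -/
import Mathlib


def IsLatFilter {L : Type*} [Lattice L] (x : Set L) : Prop :=
  x.Nonempty ∧ (∀ a b : L, a ∈ x → a ≤ b → b ∈ x) ∧
    (∀ a b : L, a ∈ x → b ∈ x → a ⊓ b ∈ x)

def IsLatIdeal {L : Type*} [Lattice L] (y : Set L) : Prop :=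
  y.Nonempty ∧ (∀ a b : L, a ∈ y → b ≤ a → b ∈ y) ∧
    (∀ a b : L, a ∈ y → b ∈ y → a ⊔ b ∈ y)

/-- the ideal x ⇝ y generated by {a ⇨ b : a ∈ x, b ∈ y} -/
def impIdeal {H : Type*} [HeytingAlgebra H] (x y : Set H) : Set H :=
  {d | ∃ a ∈ x, ∃ b ∈ y, d ≤ a ⇨ b}

/-- the join of the filters x and u -/
def filterJoin {H : Type*} [HeytingAlgebra H] (x u : Set H) : Set H :=
  {e | ∃ a ∈ x, ∃ b ∈ u, a ⊓ b ≤ e}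

theorem heyting_frame_condition {H : Type*} [HeytingAlgebra H]
    (x u y : Set H) (hx : IsLatFilter x) (hu : IsLatFilter u)
    (hy : IsLatIdeal y) :
    (u ∩ impIdeal x y).Nonempty ↔ (filterJoin x u ∩ y).Nonempty := by
  constructor
  · rintro ⟨d, hdu, a, ha, b, hb, hd⟩
    exact ⟨b, ⟨a, ha, d, hdu, inf_comm a d ▸ le_himp_iff.mp hd⟩, hb⟩
  · rintro ⟨e, ⟨a, ha, c, hc, hce⟩, he⟩
    exact ⟨c, hc, a, ha, e, he, le_himp_iff.mpr (inf_comm c a ▸ hce)⟩
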